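/- Let c ∈ S_n be a Coxeter element of the finite symmetric group, corresponding to a partition L_c ⊔ R_c of {2,…,n−1}, and embed σ ∈ S_n into Ŝ_n via the window [σ(1),…,σ(n)]. Let ĉ = s_0·c, which is a Coxeter element of Ŝ_n with L_{ĉ} = L_c ∪ {1} and R_{ĉ} = R_c ∪ {n}. Then the one-line notation of the affine permutation σ̂ contains a pattern kij with i<j<k and j ∈ L̄_{ĉ} (respectively jki with j ∈ R̄_{ĉ}) if and only if the one-line notation of σ (on {1,…,n}) contains a pattern kij with i<j<k and j ∈ L_c (respectively jki with j ∈ R_c). Consequently σ is c-sortable in S_n if and only if σ̂ is ĉ-sortable in Ŝ_n. -/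

import Mathlib

open scoped Classical

noncomputable section

/-- The affine transposition exchanging the residue class of `i` (mod `n`) with that of `j`. -/
def affT (n : ℕ) (i j : ℤ) : ℤ → ℤ := fun x =>
  if (x : ZMod n) = (i : ZMod n) then x + (j - i)
  else if (x : ZMod n) = (j : ZMod n) then x + (i - j)
  else x

/-- The simple generator `s_i` of the affine symmetric group. -/
def gen (n : ℕ) (i : ZMod n) : ℤ → ℤ := affT n (i.val : ℤ) ((i.val : ℤ) + 1)

/-- Product (composition) of a word of affine permutations, first letter outermost. -/
def wordProd (l : List (ℤ → ℤ)) : ℤ → ℤ := l.foldr (· ∘ ·) id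

/-- The Coxeter element determined by a word `c` listing the generators. -/
def coxC (n : ℕ) (c : List (ZMod n)) : ℤ → ℤ := wordProd (c.map (gen n))

/-- The letter of the half-infinite word `c^∞` at position `t`. -/
def cword (n : ℕ) (c : List (ZMod n)) (t : ℕ) : ℤ → ℤ := gen n (c.getD (t % c.length) 0)

/-- The subword of `c^∞` supported on a finite set `P` of positions, as a product. -/
def posProd (n : ℕ) (c : List (ZMod n)) (P : Finset ℕ) : ℤ → ℤ :=
  wordProd ((P.sort (· ≤ ·)).map (cword n c))

/-- `l` is an expression of `w` as a word in the simple generators. -/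
def IsExpr (n : ℕ) (w : ℤ → ℤ) (l : List (ZMod n)) : Prop := wordProd (l.map (gen n)) = w

/-- `P` is a set of positions of `c^∞` giving a reduced expression of `w`. -/
def IsReducedSet (n : ℕ) (c : List (ZMod n)) (P : Finset ℕ) (w : ℤ → ℤ) : Prop :=
  posProd n c P = w ∧ ∀ l : List (ZMod n), IsExpr n w l → P.card ≤ l.length

/-- `P` appears (lexicographically) earlier than `Q` as a subword of `c^∞`. -/
def LexEarlier (P Q : Finset ℕ) : Prop :=
  ∃ m : ℕ, m ∈ P ∧ m ∉ Q ∧ ∀ t < m, (t ∈ P ↔ t ∈ Q)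

/-- `P` is the set of positions of the `c`-sorting word of `w`: the lexicographically
first reduced expression of `w` occurring as a subword of `c^∞`. -/
def IsSortingSet (n : ℕ) (c : List (ZMod n)) (P : Finset ℕ) (w : ℤ → ℤ) : Prop :=
  IsReducedSet n c P w ∧ ∀ Q : Finset ℕ, IsReducedSet n c Q w → P = Q ∨ LexEarlier P Q

/-- `w` is `c`-sortable: the positions of its `c`-sorting word used in consecutive copies
of `c` are weakly decreasing (`p_{t + |c|} ≤ p_t`). -/
def IsCSortable (n : ℕ) (c : List (ZMod n)) (w : ℤ → ℤ) : Prop :=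
  ∃ P : Finset ℕ, IsSortingSet n c P w ∧ ∀ t : ℕ, t + c.length ∈ P → t ∈ P

/-- `w` is an affine permutation of order `n`. -/
def IsAffinePerm (n : ℕ) (w : ℤ → ℤ) : Prop :=
  Function.Bijective w ∧ (∀ x : ℤ, w (x + n) = w x + n) ∧
    (∑ x ∈ Finset.Icc (1 : ℤ) n, w x) = ∑ x ∈ Finset.Icc (1 : ℤ) n, x

/-- The one-line notation of `w` contains a pattern `k i j` with `i < j < k` and
`j ∈ L̄_c` (where `j ∈ L̄_c ⟺ c(j) > j`). -/
def HasKIJ (n : ℕ) (c : List (ZMod n)) (w : ℤ → ℤ) : Prop :=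
  ∃ t₁ t₂ t₃ : ℤ, t₁ < t₂ ∧ t₂ < t₃ ∧
    w t₂ < w t₃ ∧ w t₃ < w t₁ ∧ w t₃ < coxC n c (w t₃)

/-- The one-line notation of `w` contains a pattern `j k i` with `i < j < k` and
`j ∈ R̄_c` (where `j ∈ R̄_c ⟺ c(j) < j`). -/
def HasJKI (n : ℕ) (c : List (ZMod n)) (w : ℤ → ℤ) : Prop :=
  ∃ t₁ t₂ t₃ : ℤ, t₁ < t₂ ∧ t₂ < t₃ ∧
    w t₃ < w t₁ ∧ w t₁ < w t₂ ∧ coxC n c (w t₁) < w t₁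

/-- The (finite) one-line notation of `σ` on `{1,…,n}` contains a pattern `k i j` with
`i < j < k` and `j ∈ L_c` (for the finite Coxeter element with word `c`,
`j ∈ L_c ⟺ 2 ≤ j ≤ n−1 and c(j) > j`). -/
def HasKIJfin (n : ℕ) (c : List (ZMod n)) (w : ℤ → ℤ) : Prop :=
  ∃ t₁ t₂ t₃ : ℤ, 1 ≤ t₁ ∧ t₁ < t₂ ∧ t₂ < t₃ ∧ t₃ ≤ n ∧
    w t₂ < w t₃ ∧ w t₃ < w t₁ ∧
    2 ≤ w t₃ ∧ w t₃ ≤ (n : ℤ) - 1 ∧ w t₃ < coxC n c (w t₃)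

/-- The (finite) one-line notation of `σ` on `{1,…,n}` contains a pattern `j k i` with
`i < j < k` and `j ∈ R_c` (`j ∈ R_c ⟺ 2 ≤ j ≤ n−1 and c(j) < j`). -/
def HasJKIfin (n : ℕ) (c : List (ZMod n)) (w : ℤ → ℤ) : Prop :=
  ∃ t₁ t₂ t₃ : ℤ, 1 ≤ t₁ ∧ t₁ < t₂ ∧ t₂ < t₃ ∧ t₃ ≤ n ∧
    w t₃ < w t₁ ∧ w t₁ < w t₂ ∧
    2 ≤ w t₁ ∧ w t₁ ≤ (n : ℤ) - 1 ∧ coxC n c (w t₁) < w t₁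

-- ===== Auxiliary lemmas =====
section AuxBasic

variable {n : ℕ}

lemma zmod_dvd_of_cast_eq {a b : ℤ} (h : (a : ZMod n) = (b : ZMod n)) :
    (n : ℤ) ∣ b - a :=
  (ZMod.intCast_eq_intCast_iff_dvd_sub a b n).mp h

lemma zmod_cast_eq_of_dvd {a b : ℤ} (h : (n : ℤ) ∣ b - a) :
    (a : ZMod n) = (b : ZMod n) :=
  (ZMod.intCast_eq_intCast_iff_dvd_sub a b n).mpr h

/-- unfolded form of `gen`. -/
lemma gen_def (k : ZMod n) (x : ℤ) :
    gen n k x = if (x : ZMod n) = ((k.val : ℤ) : ZMod n) then x + 1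
      else if (x : ZMod n) = (((k.val : ℤ) + 1 : ℤ) : ZMod n) then x - 1 else x := by
  unfold gen affT
  by_cases h1 : (x : ZMod n) = ((k.val : ℤ) : ZMod n) <;>
    by_cases h2 : (x : ZMod n) = (((k.val : ℤ) + 1 : ℤ) : ZMod n) <;>
    simp [h1, h2] <;> ring

lemma gen_add_n (k : ZMod n) (x : ℤ) : gen n k (x + n) = gen n k x + n := by
  have hx : ((x + (n:ℤ) : ℤ) : ZMod n) = (x : ZMod n) := by
    push_cast; simp
  rw [gen_def, gen_def, hx]
  split <;> [skip; split] <;> ring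

end AuxBasic
section GenOrder

variable {n : ℕ}

lemma res_ne (hn : 2 ≤ n) (K : ℤ) : ((K : ZMod n) : ZMod n) ≠ ((K + 1 : ℤ) : ZMod n) := by
  intro h
  have := zmod_dvd_of_cast_eq h
  simp only [add_sub_cancel_left] at this
  have := Int.le_of_dvd one_pos this
  omega

lemma cast_shift (a : ℤ) (d : ℤ) : ((a + d : ℤ) : ZMod n) = (a : ZMod n) + (d : ZMod n) := by
  push_cast; ring

lemma gen_eq_add_one {k : ZMod n} {a : ℤ} (h : (a : ZMod n) = ((k.val : ℤ) : ZMod n)) :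
    gen n k a = a + 1 := by rw [gen_def, if_pos h]

lemma gen_eq_sub_one (hn : 2 ≤ n) {k : ZMod n} {a : ℤ}
    (h : (a : ZMod n) = (((k.val : ℤ) + 1 : ℤ) : ZMod n)) :
    gen n k a = a - 1 := by
  rw [gen_def, if_neg, if_pos h]
  rw [h]
  exact fun h' => res_ne hn _ h'.symm

lemma gen_eq_self {k : ZMod n} {a : ℤ}
    (h1 : (a : ZMod n) ≠ ((k.val : ℤ) : ZMod n))
    (h2 : (a : ZMod n) ≠ (((k.val : ℤ) + 1 : ℤ) : ZMod n)) :
    gen n k a = a := by rw [gen_def, if_neg h1, if_neg h2]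

lemma gen_bound (k : ZMod n) (a : ℤ) : a - 1 ≤ gen n k a ∧ gen n k a ≤ a + 1 := by
  rw [gen_def]; split <;> [omega; (split <;> omega)]

/-- two integers in the same residue class differing: gap at least n -/
lemma gap_ge {a b : ℤ} (hn : 2 ≤ n) (h : (a : ZMod n) = (b : ZMod n)) (hab : a < b) :
    a + n ≤ b := by
  rcases zmod_dvd_of_cast_eq h with ⟨t, ht⟩
  have ht0 : 0 < t := by nlinarith [(by omega : (0:ℤ) < n)]
  nlinarith [(by omega : (0:ℤ) < n)]

lemma gen_lt (hn : 2 ≤ n) (k : ZMod n) {a b : ℤ} (hab : a < b)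
    (hswap : ¬(b = a + 1 ∧ (a : ZMod n) = ((k.val : ℤ) : ZMod n))) :
    gen n k a < gen n k b := by
  set K : ℤ := (k.val : ℤ) with hK
  by_cases ha1 : (a : ZMod n) = (K : ZMod n)
  · rw [gen_eq_add_one ha1]
    by_cases hb1 : (b : ZMod n) = (K : ZMod n)
    · rw [gen_eq_add_one hb1]; omega
    · by_cases hb2 : (b : ZMod n) = ((K + 1 : ℤ) : ZMod n)
      · rw [gen_eq_sub_one hn hb2]
        have hne : b ≠ a + 1 := fun h => hswap ⟨h, ha1⟩
        have h1 : ((a + 1 : ℤ) : ZMod n) = ((K + 1 : ℤ) : ZMod n) := by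
          rw [cast_shift, ha1, cast_shift]
        have := gap_ge hn (h1.trans hb2.symm) (by omega : a + 1 < b)
        omega
      · rw [gen_eq_self hb1 hb2]
        have hne : b ≠ a + 1 := by
          intro h
          exact hb2 (by rw [h, cast_shift, ha1, cast_shift])
        omega
  · by_cases ha2 : (a : ZMod n) = ((K + 1 : ℤ) : ZMod n)
    · rw [gen_eq_sub_one hn ha2]
      have := gen_bound k b
      omega
    · rw [gen_eq_self ha1 ha2]
      by_cases hb1 : (b : ZMod n) = (K : ZMod n)
      · rw [gen_eq_add_one hb1]; omega
      · by_cases hb2 : (b : ZMod n) = ((K + 1 : ℤ) : ZMod n)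
        · rw [gen_eq_sub_one hn hb2]
          have hne : b ≠ a + 1 := by
            intro h
            apply ha1
            have : (b : ZMod n) = (a : ZMod n) + (1 : ZMod n) := by
              rw [h, cast_shift]; norm_cast
            rw [this, cast_shift] at hb2
            have hb2' : (a : ZMod n) + 1 = (K : ZMod n) + 1 := by
              convert hb2 using 2 <;> norm_cast
            exact add_right_cancel hb2'
          omega
        · rw [gen_eq_self hb1 hb2]; omega

/-- the swap case: if a ≡ k then gen k a = a+1 and gen k (a+1) = a -/
lemma gen_swap (hn : 2 ≤ n) {k : ZMod n} {a : ℤ}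
    (h : (a : ZMod n) = ((k.val : ℤ) : ZMod n)) :
    gen n k a = a + 1 ∧ gen n k (a + 1) = a := by
  refine ⟨gen_eq_add_one h, ?_⟩
  have h2 : ((a + 1 : ℤ) : ZMod n) = (((k.val : ℤ) + 1 : ℤ) : ZMod n) := by
    rw [cast_shift, h, cast_shift]
  rw [gen_eq_sub_one hn h2]; ring

lemma gen_involutive (hn : 2 ≤ n) (k : ZMod n) : Function.Involutive (gen n k) := by
  intro a
  set K : ℤ := (k.val : ℤ) with hK
  by_cases ha1 : (a : ZMod n) = (K : ZMod n)
  · rw [gen_eq_add_one ha1, (gen_swap hn ha1).2]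
  · by_cases ha2 : (a : ZMod n) = ((K + 1 : ℤ) : ZMod n)
    · rw [gen_eq_sub_one hn ha2]
      have h' : ((a - 1 : ℤ) : ZMod n) = (K : ZMod n) := by
        have := cast_shift (n := n) (a - 1) 1
        simp only [sub_add_cancel] at this
        rw [ha2, cast_shift] at this
        exact add_right_cancel (this.symm)
      rw [gen_eq_add_one h']; ring
    · rw [gen_eq_self ha1 ha2, gen_eq_self ha1 ha2]

lemma gen_bijective (hn : 2 ≤ n) (k : ZMod n) : Function.Bijective (gen n k) :=
  (gen_involutive hn k).bijective

end GenOrder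
section Words

variable {n : ℕ}

lemma foldr_comp (l : List (ℤ → ℤ)) (g : ℤ → ℤ) :
    l.foldr (· ∘ ·) g = wordProd l ∘ g := by
  induction l with
  | nil => rfl
  | cons f l ih => simp only [List.foldr_cons, ih, wordProd, Function.comp_assoc]

lemma wordProd_nil : wordProd [] = id := rfl

lemma wordProd_cons (f : ℤ → ℤ) (l : List (ℤ → ℤ)) :
    wordProd (f :: l) = f ∘ wordProd l := rfl

lemma wordProd_append (l₁ l₂ : List (ℤ → ℤ)) :
    wordProd (l₁ ++ l₂) = wordProd l₁ ∘ wordProd l₂ := by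
  unfold wordProd
  rw [List.foldr_append]
  exact foldr_comp l₁ _

/-- equal residues and within distance n means equal -/
lemma eq_of_res_close (hn : 2 ≤ n) {a b : ℤ} (h : (a : ZMod n) = (b : ZMod n))
    (h1 : a - b < n) (h2 : b - a < n) : a = b := by
  rcases lt_trichotomy a b with hlt | heq | hgt
  · have := gap_ge hn h hlt; omega
  · exact heq
  · have := gap_ge hn h.symm hgt; omega

lemma zmod_val_bounds (hn : 2 ≤ n) {k : ZMod n} (hk : k ≠ 0) :
    1 ≤ (k.val : ℤ) ∧ (k.val : ℤ) ≤ (n : ℤ) - 1 := by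
  haveI : NeZero n := ⟨by omega⟩
  have h1 : k.val < n := ZMod.val_lt k
  have h2 : k.val ≠ 0 := fun h => hk (by rwa [← ZMod.val_eq_zero])
  omega

/-- a nonzero generator preserves the window [1, n] -/
lemma gen_window (hn : 2 ≤ n) {k : ZMod n} (hk : k ≠ 0) {x : ℤ}
    (hx1 : 1 ≤ x) (hx2 : x ≤ n) : 1 ≤ gen n k x ∧ gen n k x ≤ n := by
  obtain ⟨hK1, hK2⟩ := zmod_val_bounds hn hk
  set K : ℤ := (k.val : ℤ) with hKdef
  by_cases h1 : (x : ZMod n) = (K : ZMod n)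
  · have : x = K := eq_of_res_close hn h1 (by omega) (by omega)
    rw [gen_eq_add_one h1]; omega
  · by_cases h2 : (x : ZMod n) = ((K + 1 : ℤ) : ZMod n)
    · have : x = K + 1 := eq_of_res_close hn h2 (by omega) (by omega)
      rw [gen_eq_sub_one hn h2]; omega
    · rw [gen_eq_self h1 h2]; omega

/-- properties of a word product of generators -/
lemma wp_props (hn : 2 ≤ n) (l : List (ZMod n)) :
    Function.Bijective (wordProd (l.map (gen n))) ∧
    (∀ x : ℤ, wordProd (l.map (gen n)) (x + n) = wordProd (l.map (gen n)) x + n) ∧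
    (∀ x : ℤ, x - l.length ≤ wordProd (l.map (gen n)) x ∧
      wordProd (l.map (gen n)) x ≤ x + l.length) := by
  induction l with
  | nil =>
    refine ⟨Function.bijective_id, fun x => rfl, fun x => ?_⟩
    simp [wordProd]
  | cons k l ih =>
    obtain ⟨ihb, ihp, ihd⟩ := ih
    simp only [List.map_cons, wordProd_cons, List.length_cons]
    refine ⟨(gen_bijective hn k).comp ihb, fun x => ?_, fun x => ?_⟩
    · simp only [Function.comp_apply, ihp, gen_add_n]
    · have := gen_bound k (wordProd (l.map (gen n)) x)
      have := ihd x
      simp only [Function.comp_apply]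
      push_cast
      omega

/-- iterated periodicity -/
lemma periodic_mul {v : ℤ → ℤ} (hp : ∀ x : ℤ, v (x + n) = v x + n) (q : ℤ) (x : ℤ) :
    v (x + q * n) = v x + q * n := by
  induction q using Int.induction_on with
  | zero => simp
  | succ q ih =>
    have : x + (q + 1) * n = (x + q * n) + n := by ring
    rw [this, hp, ih]; ring
  | pred q ih =>
    have h1 : x + (-q : ℤ) * n = (x + (-q - 1) * n) + n := by ring
    rw [h1, hp] at ih
    linear_combination ih

/-- a word with no zero letter preserves the window -/
lemma coxC_window (hn : 2 ≤ n) {c : List (ZMod n)} (h0 : (0 : ZMod n) ∉ c) {x : ℤ}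
    (hx1 : 1 ≤ x) (hx2 : x ≤ n) : 1 ≤ coxC n c x ∧ coxC n c x ≤ n := by
  induction c with
  | nil => exact ⟨hx1, hx2⟩
  | cons k c ih =>
    have hk : k ≠ 0 := fun h => h0 (by rw [h]; exact List.mem_cons_self)
    have h0' : (0 : ZMod n) ∉ c := fun h => h0 (List.mem_cons_of_mem _ h)
    have := ih h0'
    unfold coxC at *
    simp only [List.map_cons, wordProd_cons, Function.comp_apply]
    exact gen_window hn hk this.1 this.2

lemma coxC_add_n (hn : 2 ≤ n) (c : List (ZMod n)) (x : ℤ) :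
    coxC n c (x + n) = coxC n c x + n :=
  (wp_props hn c).2.1 x

end Words
section Patterns

variable {n : ℕ}

lemma coxC_cons (k : ZMod n) (c : List (ZMod n)) :
    coxC n (k :: c) = gen n k ∘ coxC n c := rfl

/-- key comparison lemma: for 2 ≤ j ≤ n-1, prefixing the letter 0 does not change
whether c moves j up or down -/
lemma key_cmp (hn : 2 ≤ n) {c : List (ZMod n)} (h0 : (0 : ZMod n) ∉ c) {j : ℤ}
    (hj1 : 2 ≤ j) (hj2 : j ≤ (n : ℤ) - 1) :
    (j < coxC n (0 :: c) j ↔ j < coxC n c j) ∧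
    (coxC n (0 :: c) j < j ↔ coxC n c j < j) := by
  haveI : NeZero n := ⟨by omega⟩
  set y := coxC n c j with hy
  have hyw : 1 ≤ y ∧ y ≤ n := coxC_window hn h0 (by omega) (by omega)
  have hgen : coxC n (0 :: c) j = gen n 0 y := by rw [coxC_cons]; rfl
  have hval : (((0 : ZMod n).val : ℤ)) = (0 : ℤ) := by simp [ZMod.val_zero]
  rw [hgen]
  by_cases h1 : (y : ZMod n) = (((0 : ZMod n).val : ℤ) : ZMod n)
  · -- y ≡ 0 mod n, so y = n
    have hyn : y = n := by
      have : (y : ZMod n) = ((n : ℤ) : ZMod n) := by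
        rw [h1, hval]; simp
      exact eq_of_res_close hn this (by omega) (by omega)
    rw [gen_eq_add_one h1, hyn]
    constructor
    · constructor <;> intro <;> omega
    · constructor <;> intro <;> omega
  · by_cases h2 : (y : ZMod n) = ((((0 : ZMod n).val : ℤ) + 1 : ℤ) : ZMod n)
    · -- y ≡ 1, so y = 1
      have hy1 : y = 1 := by
        have : (y : ZMod n) = ((1 : ℤ) : ZMod n) := by rw [h2, hval]; norm_num
        exact eq_of_res_close hn this (by omega) (by omega)
      rw [gen_eq_sub_one hn h2, hy1]
      constructor
      · constructor <;> intro <;> omega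
      · constructor <;> intro <;> omega
    · rw [gen_eq_self h1 h2]
      exact ⟨Iff.rfl, Iff.rfl⟩

/-- decompose an integer into window coordinates -/
lemma window_decomp (hn : 2 ≤ n) (x : ℤ) :
    ∃ q r : ℤ, x = q * n + r ∧ 1 ≤ r ∧ r ≤ n := by
  refine ⟨(x - 1) / n, x - ((x - 1) / n) * n, by ring, ?_, ?_⟩
  · have := Int.emod_nonneg (x - 1) (by omega : (n : ℤ) ≠ 0)
    have heq := Int.mul_ediv_add_emod (x - 1) n
    have hc : ((x - 1) / (n : ℤ)) * n = n * ((x - 1) / n) := mul_comm _ _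
    omega
  · have := Int.emod_lt_of_pos (x - 1) (by omega : (0 : ℤ) < n)
    have heq := Int.mul_ediv_add_emod (x - 1) n
    have hc : ((x - 1) / (n : ℤ)) * n = n * ((x - 1) / n) := mul_comm _ _
    omega

/-- if t₁ < t₂ < t₃ and w t₃ < w t₁, all three positions lie in a common window -/
lemma pattern_shift (hn : 2 ≤ n) {w : ℤ → ℤ}
    (hper : ∀ x : ℤ, w (x + n) = w x + n)
    (hfin : ∀ x : ℤ, 1 ≤ x → x ≤ n → 1 ≤ w x ∧ w x ≤ n)
    {t₁ t₂ t₃ : ℤ} (h12 : t₁ < t₂) (h23 : t₂ < t₃) (hv : w t₃ < w t₁) :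
    ∃ q r₁ r₂ r₃ : ℤ, 1 ≤ r₁ ∧ r₁ < r₂ ∧ r₂ < r₃ ∧ r₃ ≤ n ∧
      w t₁ = w r₁ + q * n ∧ w t₂ = w r₂ + q * n ∧ w t₃ = w r₃ + q * n := by
  obtain ⟨q₁, r₁, he₁, hr₁a, hr₁b⟩ := window_decomp hn t₁
  obtain ⟨q₂, r₂, he₂, hr₂a, hr₂b⟩ := window_decomp hn t₂
  obtain ⟨q₃, r₃, he₃, hr₃a, hr₃b⟩ := window_decomp hn t₃
  have hw₁ : w t₁ = w r₁ + q₁ * n := by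
    rw [he₁, add_comm (q₁ * n) r₁, periodic_mul hper]
  have hw₂ : w t₂ = w r₂ + q₂ * n := by
    rw [he₂, add_comm (q₂ * n) r₂, periodic_mul hper]
  have hw₃ : w t₃ = w r₃ + q₃ * n := by
    rw [he₃, add_comm (q₃ * n) r₃, periodic_mul hper]
  have hwr₁ := hfin r₁ hr₁a hr₁b
  have hwr₂ := hfin r₂ hr₂a hr₂b
  have hwr₃ := hfin r₃ hr₃a hr₃b
  -- q₁ ≤ q₂ ≤ q₃ from position order
  have hq₁₂ : q₁ ≤ q₂ := by
    by_contra h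
    push_neg at h
    have : (q₂ + 1) * (n : ℤ) ≤ q₁ * n :=
      mul_le_mul_of_nonneg_right (by omega) (by omega)
    nlinarith
  have hq₂₃ : q₂ ≤ q₃ := by
    by_contra h
    push_neg at h
    have : (q₃ + 1) * (n : ℤ) ≤ q₂ * n :=
      mul_le_mul_of_nonneg_right (by omega) (by omega)
    nlinarith
  -- q₃ ≤ q₁ from value order
  have hq₃₁ : q₃ ≤ q₁ := by
    by_contra h
    push_neg at h
    have : (q₁ + 1) * (n : ℤ) ≤ q₃ * n :=
      mul_le_mul_of_nonneg_right (by omega) (by omega)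
    nlinarith
  have e₁ : q₁ = q₂ := by omega
  have e₂ : q₂ = q₃ := by omega
  refine ⟨q₁, r₁, r₂, r₃, hr₁a, by nlinarith, by nlinarith, hr₃b, hw₁, ?_, ?_⟩
  · rw [hw₂, e₁]
  · rw [hw₃, e₁, e₂]

lemma kij_iff (hn : 2 ≤ n) {c : List (ZMod n)} (h0 : (0 : ZMod n) ∉ c) {w : ℤ → ℤ}
    (hper : ∀ x : ℤ, w (x + n) = w x + n)
    (hfin : ∀ x : ℤ, 1 ≤ x → x ≤ n → 1 ≤ w x ∧ w x ≤ n) :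
    HasKIJ n (0 :: c) w ↔ HasKIJfin n c w := by
  constructor
  · rintro ⟨t₁, t₂, t₃, h12, h23, hv23, hv31, hcond⟩
    obtain ⟨q, r₁, r₂, r₃, ha, hb, hc, hd, he₁, he₂, he₃⟩ :=
      pattern_shift hn hper hfin h12 h23 hv31
    have hwr₂ := hfin r₂ (by omega) (by omega)
    have hwr₁ := hfin r₁ (by omega) (by omega)
    have hwr₃ := hfin r₃ (by omega) (by omega)
    have hj1 : 2 ≤ w r₃ := by omega
    have hj2 : w r₃ ≤ (n : ℤ) - 1 := by omega
    have hcond' : w r₃ < coxC n (0 :: c) (w r₃) := by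
      have hp : coxC n (0 :: c) (w r₃ + q * n) = coxC n (0 :: c) (w r₃) + q * n :=
        periodic_mul (coxC_add_n hn (0 :: c)) q _
      rw [he₃, hp] at hcond
      omega
    exact ⟨r₁, r₂, r₃, by omega, hb, hc, hd, by omega, by omega, hj1, hj2,
      (key_cmp hn h0 hj1 hj2).1.mp hcond'⟩
  · rintro ⟨t₁, t₂, t₃, h1, h12, h23, h3, hv23, hv31, hj1, hj2, hcond⟩
    exact ⟨t₁, t₂, t₃, h12, h23, hv23, hv31, (key_cmp hn h0 hj1 hj2).1.mpr hcond⟩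

lemma jki_iff (hn : 2 ≤ n) {c : List (ZMod n)} (h0 : (0 : ZMod n) ∉ c) {w : ℤ → ℤ}
    (hper : ∀ x : ℤ, w (x + n) = w x + n)
    (hfin : ∀ x : ℤ, 1 ≤ x → x ≤ n → 1 ≤ w x ∧ w x ≤ n) :
    HasJKI n (0 :: c) w ↔ HasJKIfin n c w := by
  constructor
  · rintro ⟨t₁, t₂, t₃, h12, h23, hv31, hv12, hcond⟩
    obtain ⟨q, r₁, r₂, r₃, ha, hb, hc, hd, he₁, he₂, he₃⟩ :=
      pattern_shift hn hper hfin h12 h23 hv31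
    have hwr₂ := hfin r₂ (by omega) (by omega)
    have hwr₁ := hfin r₁ (by omega) (by omega)
    have hwr₃ := hfin r₃ (by omega) (by omega)
    have hj1 : 2 ≤ w r₁ := by omega
    have hj2 : w r₁ ≤ (n : ℤ) - 1 := by omega
    have hcond' : coxC n (0 :: c) (w r₁) < w r₁ := by
      have hp : coxC n (0 :: c) (w r₁ + q * n) = coxC n (0 :: c) (w r₁) + q * n :=
        periodic_mul (coxC_add_n hn (0 :: c)) q _
      rw [he₁, hp] at hcond
      omega
    exact ⟨r₁, r₂, r₃, by omega, hb, hc, hd, by omega, by omega, hj1, hj2,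
      (key_cmp hn h0 hj1 hj2).2.mp hcond'⟩
  · rintro ⟨t₁, t₂, t₃, h1, h12, h23, h3, hv31, hv12, hj1, hj2, hcond⟩
    exact ⟨t₁, t₂, t₃, h12, h23, hv31, hv12, (key_cmp hn h0 hj1 hj2).2.mpr hcond⟩

end Patterns
section Inversions

variable {n : ℕ}

/-- the set of inversions of an affine permutation (first coordinate in the window) -/
def InvSet (n : ℕ) (w : ℤ → ℤ) : Set (ℤ × ℤ) :=
  {p | 1 ≤ p.1 ∧ p.1 ≤ n ∧ p.1 < p.2 ∧ w p.2 < w p.1}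

lemma invSet_finite {w : ℤ → ℤ} {B : ℤ} (hB0 : 0 ≤ B)
    (hB : ∀ x : ℤ, x - B ≤ w x ∧ w x ≤ x + B) : (InvSet n w).Finite := by
  apply Set.Finite.subset (Set.finite_Icc ((1 : ℤ), (1 : ℤ)) (((n : ℤ)), ((n : ℤ) + 2 * B)))
  rintro ⟨i, j⟩ ⟨h1, h2, h3, h4⟩
  dsimp only at h1 h2 h3 h4
  have hi := hB i
  have hj := hB j
  simp only [Set.mem_Icc, Prod.mk_le_mk]
  exact ⟨⟨by omega, by omega⟩, by omega, by omega⟩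

/-- number of finite (window) inversions -/
def invF (n : ℕ) (w : ℤ → ℤ) : ℕ :=
  ((Finset.Icc (1 : ℤ) (n : ℤ) ×ˢ Finset.Icc (1 : ℤ) (n : ℤ)).filter
    (fun p => p.1 < p.2 ∧ w p.2 < w p.1)).card

/-- for a window-preserving permutation, every inversion lies inside the window -/
lemma invSet_window (hn : 2 ≤ n) {w : ℤ → ℤ}
    (hper : ∀ x : ℤ, w (x + n) = w x + n)
    (hfin : ∀ x : ℤ, 1 ≤ x → x ≤ n → 1 ≤ w x ∧ w x ≤ n)
    {p : ℤ × ℤ} (hp : p ∈ InvSet n w) : p.2 ≤ (n : ℤ) := by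
  obtain ⟨h1, h2, h3, h4⟩ := hp
  by_contra hj
  push_neg at hj
  obtain ⟨q, r, he, hr1, hr2⟩ := window_decomp hn p.2
  have hq : 1 ≤ q := by
    by_contra h
    push_neg at h
    have : q * (n : ℤ) ≤ 0 := mul_nonpos_of_nonpos_of_nonneg (by omega) (by omega)
    omega
  have hwv : w p.2 = w r + q * n := by rw [he, add_comm (q * (n:ℤ)) r, periodic_mul hper]
  have hwr := hfin r hr1 hr2
  have hwp1 := hfin p.1 h1 h2
  have : (n : ℤ) ≤ q * n := le_mul_of_one_le_left (by omega) hq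
  omega

lemma invSet_eq_invF (hn : 2 ≤ n) {w : ℤ → ℤ}
    (hper : ∀ x : ℤ, w (x + n) = w x + n)
    (hfin : ∀ x : ℤ, 1 ≤ x → x ≤ n → 1 ≤ w x ∧ w x ≤ n) :
    (InvSet n w).ncard = invF n w := by
  have : InvSet n w = ↑((Finset.Icc (1 : ℤ) (n : ℤ) ×ˢ Finset.Icc (1 : ℤ) (n : ℤ)).filter
      (fun p => p.1 < p.2 ∧ w p.2 < w p.1)) := by
    ext ⟨i, j⟩
    simp only [InvSet, Set.mem_setOf_eq, Finset.coe_filter, Finset.mem_product,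
      Finset.mem_Icc, Set.mem_setOf_eq]
    constructor
    · rintro ⟨h1, h2, h3, h4⟩
      have hj2 := invSet_window hn hper hfin (p := (i, j)) ⟨h1, h2, h3, h4⟩
      exact ⟨⟨⟨h1, h2⟩, ⟨by simp at hj2 ⊢; omega, by simpa using hj2⟩⟩, h3, h4⟩
    · rintro ⟨⟨⟨h1, h2⟩, _⟩, h3, h4⟩
      exact ⟨h1, h2, h3, h4⟩
  rw [this, Set.ncard_coe_finset, invF]

/-- one step of the lower bound: multiplying by a generator adds at most one inversion -/
lemma inv_step (hn : 2 ≤ n) (k : ZMod n) {u : ℤ → ℤ}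
    (hinj : Function.Injective u)
    (hper : ∀ x : ℤ, u (x + n) = u x + n)
    (hufin : (InvSet n u).Finite) :
    (InvSet n (gen n k ∘ u)).ncard ≤ (InvSet n u).ncard + 1 := by
  set S : Set (ℤ × ℤ) := {p | 1 ≤ p.1 ∧ p.1 ≤ n ∧ p.1 < p.2 ∧
    u p.2 = u p.1 + 1 ∧ ((u p.1 : ℤ) : ZMod n) = ((k.val : ℤ) : ZMod n)} with hS
  have hSsub : S.Subsingleton := by
    rintro ⟨i, j⟩ ⟨h1, h2, h3, h4, h5⟩ ⟨i', j'⟩ ⟨h1', h2', h3', h4', h5'⟩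
    simp only at *
    obtain ⟨t, ht⟩ := zmod_dvd_of_cast_eq (h5.trans h5'.symm)
    have hmc : t * (n : ℤ) = (n : ℤ) * t := mul_comm _ _
    have hui : u (i + t * n) = u i' := by
      rw [periodic_mul hper]; omega
    have hii : i + t * n = i' := hinj hui
    have ht0 : t = 0 := by
      rcases lt_trichotomy t 0 with h | h | h
      · have : t * (n : ℤ) ≤ -n := by nlinarith [(by omega : (0:ℤ) < n)]
        omega
      · exact h
      · have : (n : ℤ) ≤ t * n := le_mul_of_one_le_left (by omega) (by omega)
        omega
    have hii' : i = i' := by rw [ht0, zero_mul, add_zero] at hii; exact hii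
    have hjj : u j = u j' := by rw [h4, h4', hii']
    have hj2 := hinj hjj
    rw [Prod.mk.injEq]
    exact ⟨hii', hj2⟩
  have hsub : InvSet n (gen n k ∘ u) ⊆ InvSet n u ∪ S := by
    rintro ⟨i, j⟩ ⟨h1, h2, h3, h4⟩
    simp only [Function.comp_apply] at h4
    rcases lt_trichotomy (u j) (u i) with h | h | h
    · exact Or.inl ⟨h1, h2, h3, h⟩
    · exact absurd (hinj h) (by omega)
    · right
      by_contra hns
      have hswap : ¬(u j = u i + 1 ∧ ((u i : ℤ) : ZMod n) = ((k.val : ℤ) : ZMod n)) :=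
        fun ⟨ha, hb⟩ => hns ⟨h1, h2, h3, ha, hb⟩
      have := gen_lt hn k h hswap
      omega
  have hSfin : S.Finite := hSsub.finite
  calc (InvSet n (gen n k ∘ u)).ncard ≤ (InvSet n u ∪ S).ncard :=
        Set.ncard_le_ncard hsub (hufin.union hSfin)
    _ ≤ (InvSet n u).ncard + S.ncard := Set.ncard_union_le _ _
    _ ≤ (InvSet n u).ncard + 1 := by
        have : S.ncard ≤ 1 := by
          rcases Set.eq_empty_or_nonempty S with h | ⟨x, hx⟩
          · simp [h]
          · have : S ⊆ {x} := fun y hy => hSsub hy hx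
            calc S.ncard ≤ ({x} : Set (ℤ × ℤ)).ncard :=
                  Set.ncard_le_ncard this (Set.finite_singleton x)
              _ = 1 := Set.ncard_singleton x
        omega

/-- lower bound: a word of length ℓ has at most ℓ inversions -/
lemma lower_bound (hn : 2 ≤ n) (l : List (ZMod n)) :
    (InvSet n (wordProd (l.map (gen n)))).ncard ≤ l.length := by
  induction l with
  | nil =>
    have : InvSet n (wordProd ([] : List (ℤ → ℤ))) = ∅ := by
      ext ⟨i, j⟩
      simp only [InvSet, wordProd_nil, id_eq, Set.mem_setOf_eq, Set.mem_empty_iff_false,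
        iff_false]
      rintro ⟨_, _, h3, h4⟩; omega
    simp only [List.map_nil, this, Set.ncard_empty, List.length_nil, le_refl]
  | cons k l ih =>
    obtain ⟨⟨hinj, _⟩, hper, hd⟩ := wp_props hn l
    have hufin : (InvSet n (wordProd (l.map (gen n)))).Finite :=
      invSet_finite (B := (l.length : ℤ)) (by omega) (fun x => by have := hd x; push_cast; omega)
    simp only [List.map_cons, wordProd_cons, List.length_cons]
    calc (InvSet n (gen n k ∘ wordProd (l.map (gen n)))).ncard
        ≤ (InvSet n (wordProd (l.map (gen n)))).ncard + 1 := inv_step hn k hinj hper hufin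
      _ ≤ l.length + 1 := by omega

end Inversions
section Bubble

variable {n : ℕ}

/-- a window-preserving perm is onto the window -/
lemma wp_surj_window (hn : 2 ≤ n) {w : ℤ → ℤ} (hbij : Function.Bijective w)
    (hper : ∀ x : ℤ, w (x + n) = w x + n)
    (hfin : ∀ x : ℤ, 1 ≤ x → x ≤ n → 1 ≤ w x ∧ w x ≤ n)
    {y : ℤ} (hy1 : 1 ≤ y) (hy2 : y ≤ n) : ∃ p, 1 ≤ p ∧ p ≤ (n : ℤ) ∧ w p = y := by
  obtain ⟨p, hp⟩ := hbij.2 y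
  obtain ⟨q, r, he, hr1, hr2⟩ := window_decomp hn p
  have hwv : w p = w r + q * n := by rw [he, add_comm (q * (n:ℤ)) r, periodic_mul hper]
  have hwr := hfin r hr1 hr2
  have hq : q = 0 := by
    rcases lt_trichotomy q 0 with h | h | h
    · have : q * (n : ℤ) ≤ -n := by nlinarith [(by omega : (0:ℤ) < n)]
      omega
    · exact h
    · have : (n : ℤ) ≤ q * n := le_mul_of_one_le_left (by omega) (by omega)
      omega
  rw [hq, zero_mul, add_zero] at hwv
  exact ⟨r, hr1, hr2, by omega⟩

/-- displacement bound for a window-preserving perm -/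
lemma wp_disp (hn : 2 ≤ n) {w : ℤ → ℤ}
    (hper : ∀ x : ℤ, w (x + n) = w x + n)
    (hfin : ∀ x : ℤ, 1 ≤ x → x ≤ n → 1 ≤ w x ∧ w x ≤ n) (x : ℤ) :
    x - n ≤ w x ∧ w x ≤ x + n := by
  obtain ⟨q, r, he, hr1, hr2⟩ := window_decomp hn x
  have hwv : w x = w r + q * n := by rw [he, add_comm (q * (n:ℤ)) r, periodic_mul hper]
  have hwr := hfin r hr1 hr2
  omega

/-- multiplying a window-preserving perm by s₀ adds an inversion -/
lemma s0_adds (hn : 2 ≤ n) {w : ℤ → ℤ} (hbij : Function.Bijective w)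
    (hper : ∀ x : ℤ, w (x + n) = w x + n)
    (hfin : ∀ x : ℤ, 1 ≤ x → x ≤ n → 1 ≤ w x ∧ w x ≤ n) :
    (InvSet n w).ncard + 1 ≤ (InvSet n (gen n 0 ∘ w)).ncard := by
  haveI : NeZero n := ⟨by omega⟩
  have hval : (((0 : ZMod n).val : ℤ)) = (0 : ℤ) := by simp [ZMod.val_zero]
  obtain ⟨p, hp1, hp2, hpv⟩ := wp_surj_window hn hbij hper hfin (le_refl 1) (by omega)
  obtain ⟨r, hr1, hr2, hrv⟩ := wp_surj_window hn hbij hper hfin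
    (by omega : (1:ℤ) ≤ n) (le_refl (n:ℤ))
  -- w r = n, w (p + n) = 1 + n
  have hq' : w (p + n) = (n : ℤ) + 1 := by rw [hper, hpv]; ring
  have hgn : gen n 0 ((n : ℤ)) = (n : ℤ) + 1 := by
    apply gen_eq_add_one
    rw [hval]
    exact zmod_cast_eq_of_dvd ⟨-1, by ring⟩
  have hgn1 : gen n 0 ((n : ℤ) + 1) = (n : ℤ) := by
    have := gen_swap (k := (0 : ZMod n)) hn (a := (n : ℤ))
      (by rw [hval]; exact zmod_cast_eq_of_dvd ⟨-1, by ring⟩)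
    exact this.2
  have hfinw : (InvSet n w).Finite :=
    invSet_finite (B := (n : ℤ)) (by omega) (wp_disp hn hper hfin)
  have hfing : (InvSet n (gen n 0 ∘ w)).Finite := by
    apply invSet_finite (B := (n : ℤ) + 1) (by omega)
    intro x
    have := wp_disp hn hper hfin x
    have := gen_bound (0 : ZMod n) (w x)
    simp only [Function.comp_apply]
    omega
  have hnotmem : (r, p + n) ∉ InvSet n w := by
    rintro ⟨_, _, _, h4⟩
    rw [hq', hrv] at h4
    omega
  have hins : insert ((r : ℤ), p + n) (InvSet n w) ⊆ InvSet n (gen n 0 ∘ w) := by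
    rintro x hx
    rcases Set.mem_insert_iff.mp hx with hx | hx
    · subst hx
      refine ⟨hr1, hr2, by omega, ?_⟩
      simp only [Function.comp_apply]
      rw [hq', hrv, hgn, hgn1]
      omega
    · obtain ⟨h1, h2, h3, h4⟩ := hx
      have hj2 : x.2 ≤ (n : ℤ) := invSet_window hn hper hfin ⟨h1, h2, h3, h4⟩
      have hw1 := hfin x.1 h1 h2
      have hw2 := hfin x.2 (by omega) hj2
      refine ⟨h1, h2, h3, ?_⟩
      simp only [Function.comp_apply]
      have hswap : ¬(w x.1 = w x.2 + 1 ∧ ((w x.2 : ℤ) : ZMod n) = (((0:ZMod n).val : ℤ) : ZMod n)) := by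
        rintro ⟨ha, hb⟩
        rw [hval] at hb
        have : w x.2 = (n : ℤ) := by
          have : ((w x.2 : ℤ) : ZMod n) = ((n : ℤ) : ZMod n) := by
            rw [hb]; exact zmod_cast_eq_of_dvd ⟨1, by ring⟩
          exact eq_of_res_close hn this (by omega) (by omega)
        omega
      exact gen_lt hn 0 h4 hswap
  calc (InvSet n w).ncard + 1 = (insert ((r : ℤ), p + n) (InvSet n w)).ncard := by
        rw [Set.ncard_insert_of_notMem hnotmem hfinw]
    _ ≤ (InvSet n (gen n 0 ∘ w)).ncard := Set.ncard_le_ncard hins hfing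

/-- no descents means monotone on the window -/
lemma no_descent_mono {w : ℤ → ℤ}
    (hnd : ∀ i : ℤ, 1 ≤ i → i ≤ (n : ℤ) - 1 → w i < w (i + 1)) :
    ∀ a b : ℤ, 1 ≤ a → b ≤ (n : ℤ) → a < b → w a < w b := by
  intro a b ha hb hab
  have key : ∀ d : ℕ, ∀ b' : ℤ, b' = a + 1 + (d : ℤ) → b' ≤ (n : ℤ) → w a < w b' := by
    intro d
    induction d with
    | zero =>
      intro b' he hble
      have : b' = a + 1 := by push_cast at he; omega
      subst this
      exact hnd a ha (by omega)
    | succ d ih =>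
      intro b' he hble
      have h1 : w a < w (a + 1 + (d : ℤ)) := ih _ rfl (by push_cast at he; omega)
      have h2 : w (a + 1 + (d : ℤ)) < w (a + 1 + (d : ℤ) + 1) :=
        hnd _ (by omega) (by push_cast at he; omega)
      have hbe : b' = a + 1 + (d : ℤ) + 1 := by push_cast at he; omega
      rw [hbe]
      omega
  exact key (b - (a + 1)).toNat b (by omega) hb

/-- an increasing window-preserving permutation is the identity -/
lemma mono_eq_id (hn : 2 ≤ n) {w : ℤ → ℤ} (hinj : Function.Injective w)
    (hper : ∀ x : ℤ, w (x + n) = w x + n)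
    (hfin : ∀ x : ℤ, 1 ≤ x → x ≤ n → 1 ≤ w x ∧ w x ≤ n)
    (hmono : ∀ a b : ℤ, 1 ≤ a → b ≤ (n : ℤ) → a < b → w a < w b) :
    w = id := by
  have hwin : ∀ x : ℤ, 1 ≤ x → x ≤ (n : ℤ) → w x = x := by
    intro x hx1 hx2
    have hle1 : x ≤ w x := by
      have hcard : (Finset.Icc 1 x).card ≤ (Finset.Icc 1 (w x)).card := by
        apply Finset.card_le_card_of_injOn w
        · intro y hy
          simp only [Finset.mem_coe, Finset.mem_Icc] at hy ⊢
          obtain ⟨hy1, hy2⟩ := hy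
          refine ⟨(hfin y hy1 (by omega)).1, ?_⟩
          rcases eq_or_lt_of_le hy2 with h | h
          · rw [h]
          · exact le_of_lt (hmono y x hy1 hx2 h)
        · exact fun a _ b _ hab => hinj hab
      rw [Int.card_Icc, Int.card_Icc] at hcard
      omega
    have hle2 : w x ≤ x := by
      have hcard : (Finset.Icc x (n : ℤ)).card ≤ (Finset.Icc (w x) (n : ℤ)).card := by
        apply Finset.card_le_card_of_injOn w
        · intro y hy
          simp only [Finset.mem_coe, Finset.mem_Icc] at hy ⊢
          obtain ⟨hy1, hy2⟩ := hy
          refine ⟨?_, (hfin y (by omega) hy2).2⟩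
          rcases eq_or_lt_of_le hy1 with h | h
          · rw [← h]
          · exact le_of_lt (hmono x y hx1 hy2 h)
        · exact fun a _ b _ hab => hinj hab
      rw [Int.card_Icc, Int.card_Icc] at hcard
      have := (hfin x hx1 hx2).2
      omega
    omega
  funext x
  obtain ⟨q, r, he, hr1, hr2⟩ := window_decomp hn x
  have hwv : w x = w r + q * n := by rw [he, add_comm (q * (n:ℤ)) r, periodic_mul hper]
  rw [hwv, hwin r hr1 hr2, he]
  simp [add_comm]

lemma invF_zero_iff (hn : 2 ≤ n) {w : ℤ → ℤ} (hinj : Function.Injective w) :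
    invF n w = 0 ↔ ∀ i : ℤ, 1 ≤ i → i ≤ (n : ℤ) - 1 → w i < w (i + 1) := by
  constructor
  · intro h i hi1 hi2
    have hne : w i ≠ w (i + 1) := fun he => by have := hinj he; omega
    by_contra hc
    push_neg at hc
    have hmem : ((i, i + 1) : ℤ × ℤ) ∈ (Finset.Icc (1 : ℤ) (n : ℤ) ×ˢ
        Finset.Icc (1 : ℤ) (n : ℤ)).filter (fun p => p.1 < p.2 ∧ w p.2 < w p.1) := by
      rw [Finset.mem_filter, Finset.mem_product, Finset.mem_Icc, Finset.mem_Icc]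
      exact ⟨⟨⟨hi1, by omega⟩, ⟨by omega, by omega⟩⟩, by omega,
        lt_of_le_of_ne hc (by exact fun he => hne he.symm)⟩
    rw [invF, Finset.card_eq_zero] at h
    rw [h] at hmem
    exact absurd hmem (Finset.notMem_empty _)
  · intro h
    rw [invF, Finset.card_eq_zero, Finset.filter_eq_empty_iff]
    rintro ⟨i, j⟩ hij
    rw [Finset.mem_product, Finset.mem_Icc, Finset.mem_Icc] at hij
    rintro ⟨hlt, hinv⟩
    dsimp only at *
    have := no_descent_mono h i j (by omega) (by omega) hlt
    omega

/-- bubble sort: a window-preserving permutation has an expression of length ≤ invF -/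
lemma bubble (hn : 2 ≤ n) : ∀ m : ℕ, ∀ w : ℤ → ℤ, Function.Bijective w →
    (∀ x : ℤ, w (x + n) = w x + n) →
    (∀ x : ℤ, 1 ≤ x → x ≤ n → 1 ≤ w x ∧ w x ≤ n) →
    invF n w ≤ m → ∃ l : List (ZMod n), IsExpr n w l ∧ l.length ≤ invF n w := by
  haveI : NeZero n := ⟨by omega⟩
  intro m
  induction m with
  | zero =>
    intro w hbij hper hfin hm
    have h0 : invF n w = 0 := by omega
    have hmono := no_descent_mono (n := n) ((invF_zero_iff hn hbij.1).mp h0)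
    have hid := mono_eq_id hn hbij.1 hper hfin hmono
    exact ⟨[], by rw [IsExpr, List.map_nil, wordProd_nil, hid], Nat.zero_le _⟩
  | succ m ih =>
    intro w hbij hper hfin hm
    by_cases h0 : invF n w = 0
    · have hmono := no_descent_mono (n := n) ((invF_zero_iff hn hbij.1).mp h0)
      have hid := mono_eq_id hn hbij.1 hper hfin hmono
      exact ⟨[], by rw [IsExpr, List.map_nil, wordProd_nil, hid], Nat.zero_le _⟩
    · -- there is a descent i
      have hdesc : ∃ i : ℤ, 1 ≤ i ∧ i ≤ (n : ℤ) - 1 ∧ w (i + 1) < w i := by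
        by_contra hc
        push_neg at hc
        apply h0
        rw [invF_zero_iff hn hbij.1]
        intro i h1 h2
        have hne : w i ≠ w (i + 1) := fun he => by have := hbij.1 he; omega
        have := hc i h1 h2
        omega
      obtain ⟨i, hi1, hi2, hdes⟩ := hdesc
      set k : ZMod n := ((i.toNat : ℕ) : ZMod n) with hk
      have hkval : ((k.val : ℕ) : ℤ) = i := by
        rw [hk, ZMod.val_natCast_of_lt (by omega : i.toNat < n)]
        omega
      have hk0 : k ≠ 0 := by
        intro h
        rw [h] at hkval
        simp [ZMod.val_zero] at hkval
        omega
      have hresi : ((i : ℤ) : ZMod n) = ((k.val : ℤ) : ZMod n) := by rw [hkval]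
      have hswap := gen_swap hn hresi
      set w' : ℤ → ℤ := w ∘ gen n k with hw'
      have hbij' : Function.Bijective w' := hbij.comp (gen_bijective hn k)
      have hper' : ∀ x : ℤ, w' (x + n) = w' x + n := by
        intro x
        simp only [hw', Function.comp_apply, gen_add_n, hper]
      have hfin' : ∀ x : ℤ, 1 ≤ x → x ≤ n → 1 ≤ w' x ∧ w' x ≤ n := by
        intro x hx1 hx2
        obtain ⟨hg1, hg2⟩ := gen_window hn hk0 hx1 hx2
        exact hfin _ hg1 hg2
      -- inversion count decreases
      have hcard : invF n w' < invF n w := by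
        have hmem : ((i, i + 1) : ℤ × ℤ) ∈ (Finset.Icc (1 : ℤ) (n : ℤ) ×ˢ
            Finset.Icc (1 : ℤ) (n : ℤ)).filter (fun p => p.1 < p.2 ∧ w p.2 < w p.1) := by
          rw [Finset.mem_filter, Finset.mem_product, Finset.mem_Icc, Finset.mem_Icc]
          exact ⟨⟨⟨hi1, by omega⟩, ⟨by omega, by omega⟩⟩, by omega, hdes⟩
        have hle : invF n w' ≤ ((Finset.Icc (1 : ℤ) (n : ℤ) ×ˢ
            Finset.Icc (1 : ℤ) (n : ℤ)).filter
            (fun p => p.1 < p.2 ∧ w p.2 < w p.1)).card - 1 := by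
          rw [invF]
          have := Finset.card_erase_of_mem hmem
          rw [← this]
          apply Finset.card_le_card_of_injOn (fun p => (gen n k p.1, gen n k p.2))
          · rintro ⟨a, b⟩ hab
            rw [Finset.mem_coe, Finset.mem_filter, Finset.mem_product, Finset.mem_Icc, Finset.mem_Icc] at hab
            obtain ⟨⟨⟨ha1, ha2⟩, hb1, hb2⟩, hlt, hinv⟩ := hab
            dsimp only at *
            have hne : ¬(a = i ∧ b = i + 1) := by
              rintro ⟨rfl, rfl⟩
              rw [hw'] at hinv
              simp only [Function.comp_apply, hswap.1, hswap.2] at hinv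
              omega
            have hglt : gen n k a < gen n k b := by
              apply gen_lt hn k hlt
              rintro ⟨hba, hres⟩
              have : a = i := eq_of_res_close hn (hres.trans hresi.symm) (by omega) (by omega)
              exact hne ⟨this, by omega⟩
            obtain ⟨hga1, hga2⟩ := gen_window hn hk0 ha1 ha2
            obtain ⟨hgb1, hgb2⟩ := gen_window hn hk0 hb1 hb2
            rw [Finset.mem_coe, Finset.mem_erase, Finset.mem_filter, Finset.mem_product,
              Finset.mem_Icc, Finset.mem_Icc]
            refine ⟨?_, ⟨⟨hga1, hga2⟩, hgb1, hgb2⟩, hglt, ?_⟩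
            · intro hcontra
              rw [Prod.mk.injEq] at hcontra
              obtain ⟨hca, hcb⟩ := hcontra
              have ha : a = gen n k i := by
                rw [← hca, gen_involutive hn k a]
              rw [hswap.1] at ha
              have hb : b = gen n k (i + 1) := by
                rw [← hcb, gen_involutive hn k b]
              rw [hswap.2] at hb
              omega
            · rw [hw'] at hinv
              simpa using hinv
          · rintro ⟨a, b⟩ ha ⟨a', b'⟩ hb hab
            rw [Prod.mk.injEq] at hab ⊢
            obtain ⟨h1, h2⟩ := hab
            constructor
            · have := congrArg (gen n k) h1
              rwa [gen_involutive hn k, gen_involutive hn k] at this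
            · have := congrArg (gen n k) h2
              rwa [gen_involutive hn k, gen_involutive hn k] at this
        have hpos : 0 < ((Finset.Icc (1 : ℤ) (n : ℤ) ×ˢ Finset.Icc (1 : ℤ) (n : ℤ)).filter
            (fun p => p.1 < p.2 ∧ w p.2 < w p.1)).card := Finset.card_pos.mpr ⟨_, hmem⟩
        unfold invF at hle ⊢
        omega
      obtain ⟨l', hexpr', hlen'⟩ := ih w' hbij' hper' hfin' (by omega)
      refine ⟨l' ++ [k], ?_, ?_⟩
      · rw [IsExpr, List.map_append, wordProd_append, List.map_singleton]
        rw [IsExpr] at hexpr'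
        rw [hexpr']
        funext x
        simp only [Function.comp_apply, hw', wordProd_cons, wordProd_nil]
        simp only [Function.comp_apply, Function.comp, id_eq]
        rw [gen_involutive hn k]
      · rw [List.length_append]
        simp only [List.length_singleton]
        omega

end Bubble
section NoZero

variable {n : ℕ}

/-- KEY LEMMA: a minimal-length expression of a window-preserving permutation
never uses the generator s₀. -/
lemma no_zero_in_min (hn : 2 ≤ n) : ∀ l : List (ZMod n), ∀ w : ℤ → ℤ,
    Function.Bijective w → (∀ x : ℤ, w (x + n) = w x + n) →
    (∀ x : ℤ, 1 ≤ x → x ≤ n → 1 ≤ w x ∧ w x ≤ n) →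
    IsExpr n w l → (∀ m' : List (ZMod n), IsExpr n w m' → l.length ≤ m'.length) →
    (0 : ZMod n) ∉ l := by
  intro l
  induction l with
  | nil => intro w _ _ _ _ _; exact List.not_mem_nil
  | cons k l ih =>
    intro w hbij hper hfin hexpr hmin
    have hu : gen n k ∘ wordProd (l.map (gen n)) = w := by
      rw [IsExpr, List.map_cons, wordProd_cons] at hexpr
      exact hexpr
    set u : ℤ → ℤ := wordProd (l.map (gen n)) with hudef
    have huw : u = gen n k ∘ w := by
      rw [← hu]
      funext x
      exact (gen_involutive hn k (u x)).symm
    have hminu : ∀ m' : List (ZMod n), IsExpr n u m' → l.length ≤ m'.length := by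
      intro m' hm'
      have hexp : IsExpr n w (k :: m') := by
        rw [IsExpr, List.map_cons, wordProd_cons, hm', hu]
      have := hmin (k :: m') hexp
      simpa using this
    by_cases hk : k = 0
    · exfalso
      subst hk
      have h1 : (InvSet n u).ncard ≤ l.length := lower_bound hn l
      have h2 : (InvSet n w).ncard + 1 ≤ (InvSet n u).ncard := by
        rw [huw]
        exact s0_adds hn hbij hper hfin
      obtain ⟨lb, hlb, hlen⟩ := bubble hn (invF n w) w hbij hper hfin (le_refl _)
      have h4 : l.length + 1 ≤ invF n w := by
        have := hmin lb hlb
        simp only [List.length_cons] at this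
        omega
      have h5 : (InvSet n w).ncard = invF n w := invSet_eq_invF hn hper hfin
      omega
    · have hbiju : Function.Bijective u := by
        rw [huw]; exact (gen_bijective hn k).comp hbij
      have hperu : ∀ x : ℤ, u (x + n) = u x + n := by
        intro x
        rw [huw]
        simp only [Function.comp_apply, hper, gen_add_n]
      have hfinu : ∀ x : ℤ, 1 ≤ x → x ≤ n → 1 ≤ u x ∧ u x ≤ n := by
        intro x hx1 hx2
        rw [huw]
        exact gen_window hn hk (hfin x hx1 hx2).1 (hfin x hx1 hx2).2
      have hnl := ih u hbiju hperu hfinu rfl hminu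
      intro hmem
      rcases List.mem_cons.mp hmem with h | h
      · exact hk h.symm
      · exact hnl h

end NoZero
section Phi

variable {n : ℕ}

/-- position map from the c-word to the ĉ-word -/
def phiP (n : ℕ) (t : ℕ) : ℕ := n * (t / (n - 1)) + t % (n - 1) + 1

lemma phiP_eq (hn : 2 ≤ n) (t : ℕ) : phiP n t = t + t / (n - 1) + 1 := by
  have hdm := Nat.div_add_mod t (n - 1)
  have hmul : ((n - 1) + 1) * (t / (n - 1)) = (n - 1) * (t / (n - 1)) + t / (n - 1) :=
    Nat.succ_mul _ _
  rw [(by omega : (n - 1) + 1 = n)] at hmul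
  unfold phiP
  omega

lemma phiP_lt (hn : 2 ≤ n) {t t' : ℕ} (h : t < t') : phiP n t < phiP n t' := by
  rw [phiP_eq hn, phiP_eq hn]
  have := Nat.div_le_div_right (c := n - 1) (le_of_lt h)
  omega

lemma phiP_inj (hn : 2 ≤ n) : Function.Injective (phiP n) := by
  intro a b h
  rcases lt_trichotomy a b with hc | hc | hc
  · exact absurd h (by have := phiP_lt hn hc; omega)
  · exact hc
  · exact absurd h (by have := phiP_lt hn hc; omega)

lemma phiP_lt_reflect (hn : 2 ≤ n) {t t' : ℕ} (h : phiP n t < phiP n t') : t < t' := by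
  by_contra hc
  push_neg at hc
  rcases eq_or_lt_of_le hc with hc | hc
  · rw [hc] at h; omega
  · have := phiP_lt hn hc; omega

lemma phiP_mod (hn : 2 ≤ n) (t : ℕ) : phiP n t % n = t % (n - 1) + 1 := by
  have hr : t % (n - 1) < n - 1 := Nat.mod_lt _ (by omega)
  have he : phiP n t = n * (t / (n - 1)) + (t % (n - 1) + 1) := by unfold phiP; omega
  rw [he, Nat.mul_add_mod, Nat.mod_eq_of_lt (by omega)]

lemma phiP_mod_ne (hn : 2 ≤ n) (t : ℕ) : phiP n t % n ≠ 0 := by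
  rw [phiP_mod hn]; omega

lemma phiP_psi (hn : 2 ≤ n) {m : ℕ} (h : m % n ≠ 0) :
    phiP n ((n - 1) * (m / n) + (m % n - 1)) = m := by
  have h1 : m % n < n := Nat.mod_lt _ (by omega)
  have h2 : m % n - 1 < n - 1 := by omega
  have hdm := Nat.div_add_mod m n
  unfold phiP
  rw [Nat.mul_add_div (by omega : 0 < n - 1), Nat.mul_add_mod,
    Nat.div_eq_of_lt h2, Nat.mod_eq_of_lt h2]
  simp only [Nat.add_zero]
  omega

lemma phiP_shift (hn : 2 ≤ n) (t : ℕ) : phiP n (t + (n - 1)) = phiP n t + n := by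
  unfold phiP
  rw [Nat.add_div_right _ (by omega : 0 < n - 1), Nat.add_mod_right, Nat.mul_add,
    Nat.mul_one]
  omega

lemma phiP_small (hn : 2 ≤ n) {t : ℕ} (h : t < n - 1) : phiP n t = t + 1 := by
  unfold phiP
  rw [Nat.div_eq_of_lt h, Nat.mod_eq_of_lt h, Nat.mul_zero]
  omega

/-- sorting commutes with a strictly monotone map -/
lemma sort_image_mono (hn : 2 ≤ n) (P : Finset ℕ) :
    ((P.image (phiP n)).sort (· ≤ ·)) = (P.sort (· ≤ ·)).map (phiP n) := by
  refine (fun hp h1 h2 => List.Perm.eq_of_pairwise' (r := ((· ≤ ·) : ℕ → ℕ → Prop)) h1 h2 hp) ?_ ?_ ?_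
  · rw [← Multiset.coe_eq_coe, Finset.sort_eq, ← Multiset.map_coe, Finset.sort_eq,
      Finset.image_val]
    exact Multiset.dedup_eq_self.mpr ((P.nodup.map (phiP_inj hn)))
  · exact Finset.pairwise_sort _ _
  · exact List.Pairwise.map (phiP n)
      (fun a b h => by
        rcases eq_or_lt_of_le h with h | h
        · rw [h]
        · exact le_of_lt (phiP_lt hn h))
      (Finset.pairwise_sort _ _)

lemma mem_image_phiP (hn : 2 ≤ n) {P : Finset ℕ} {s : ℕ} :
    phiP n s ∈ P.image (phiP n) ↔ s ∈ P := by
  constructor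
  · intro h
    obtain ⟨b, hb, hfb⟩ := Finset.mem_image.mp h
    rwa [← phiP_inj hn hfb]
  · exact fun h => Finset.mem_image_of_mem _ h

end Phi
section Transfer

variable {n : ℕ}

lemma cword_hat_phi (hn : 2 ≤ n) {c : List (ZMod n)} (hlen : c.length = n - 1) (t : ℕ) :
    cword n (0 :: c) (phiP n t) = cword n c t := by
  have hlen1 : (0 :: c).length = n := by simp only [List.length_cons, hlen]; omega
  unfold cword
  rw [hlen1, hlen, phiP_mod hn]
  simp [List.getD_cons_succ]

lemma posProd_image (hn : 2 ≤ n) {c : List (ZMod n)} (hlen : c.length = n - 1)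
    (P : Finset ℕ) : posProd n (0 :: c) (P.image (phiP n)) = posProd n c P := by
  unfold posProd
  rw [sort_image_mono hn, List.map_map]
  apply congrArg wordProd
  apply List.map_congr_left
  intro t _
  exact cword_hat_phi hn hlen t

lemma reduced_image (hn : 2 ≤ n) {c : List (ZMod n)} (hlen : c.length = n - 1)
    {P : Finset ℕ} {w : ℤ → ℤ} :
    IsReducedSet n c P w ↔ IsReducedSet n (0 :: c) (P.image (phiP n)) w := by
  unfold IsReducedSet
  rw [posProd_image hn hlen, Finset.card_image_of_injective _ (phiP_inj hn)]

lemma reduced_avoid_zero (hn : 2 ≤ n) {c : List (ZMod n)} (hlen : c.length = n - 1)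
    {Q : Finset ℕ} {w : ℤ → ℤ} (hbij : Function.Bijective w)
    (hper : ∀ x : ℤ, w (x + n) = w x + n)
    (hfin : ∀ x : ℤ, 1 ≤ x → x ≤ n → 1 ≤ w x ∧ w x ≤ n)
    (hred : IsReducedSet n (0 :: c) Q w) : ∀ m ∈ Q, m % n ≠ 0 := by
  intro m hm hm0
  have hlen1 : (0 :: c).length = n := by simp only [List.length_cons, hlen]; omega
  set L : List (ZMod n) := (Q.sort (· ≤ ·)).map (fun t => (0 :: c).getD (t % n) 0) with hL
  have hexpr : IsExpr n w L := by
    rw [IsExpr, hL, List.map_map]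
    have hfun : (gen n ∘ fun t => (0 :: c).getD (t % n) 0) = cword n (0 :: c) := by
      funext t
      unfold cword
      rw [hlen1]
      rfl
    rw [hfun]
    exact hred.1
  have hminL : ∀ m' : List (ZMod n), IsExpr n w m' → L.length ≤ m'.length := by
    intro m' hm'
    have := hred.2 m' hm'
    rw [hL, List.length_map, Finset.length_sort]
    exact this
  have hno := no_zero_in_min hn L w hbij hper hfin hexpr hminL
  apply hno
  rw [hL]
  apply List.mem_map.mpr
  exact ⟨m, (Finset.mem_sort _).mpr hm, by rw [hm0]; rfl⟩

lemma eq_image_of_avoid (hn : 2 ≤ n) {Q : Finset ℕ} (h : ∀ m ∈ Q, m % n ≠ 0) :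
    ∃ P : Finset ℕ, Q = P.image (phiP n) := by
  refine ⟨Q.image (fun m => (n - 1) * (m / n) + (m % n - 1)), ?_⟩
  ext a
  simp only [Finset.mem_image]
  constructor
  · intro ha
    exact ⟨(n - 1) * (a / n) + (a % n - 1), ⟨a, ha, rfl⟩, phiP_psi hn (h a ha)⟩
  · rintro ⟨b, ⟨m, hm, rfl⟩, rfl⟩
    rw [phiP_psi hn (h m hm)]
    exact hm

lemma lex_image (hn : 2 ≤ n) {P P' : Finset ℕ} (h : LexEarlier P P') :
    LexEarlier (P.image (phiP n)) (P'.image (phiP n)) := by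
  obtain ⟨m, hmP, hmP', hpre⟩ := h
  refine ⟨phiP n m, (mem_image_phiP hn).mpr hmP,
    fun hc => hmP' ((mem_image_phiP hn).mp hc), ?_⟩
  intro t ht
  by_cases h0 : t % n = 0
  · constructor <;> intro hc <;> exfalso
    · obtain ⟨b, _, hfb⟩ := Finset.mem_image.mp hc
      exact phiP_mod_ne hn b (by rw [hfb]; exact h0)
    · obtain ⟨b, _, hfb⟩ := Finset.mem_image.mp hc
      exact phiP_mod_ne hn b (by rw [hfb]; exact h0)
  · obtain ⟨s, hs⟩ : ∃ s, phiP n s = t := ⟨_, phiP_psi hn h0⟩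
    subst hs
    have hst : s < m := phiP_lt_reflect hn ht
    rw [mem_image_phiP hn, mem_image_phiP hn]
    exact hpre s hst

lemma lex_image_rev (hn : 2 ≤ n) {P P' : Finset ℕ}
    (h : LexEarlier (P.image (phiP n)) (P'.image (phiP n))) : LexEarlier P P' := by
  obtain ⟨m, hmP, hmP', hpre⟩ := h
  obtain ⟨m₀, hm₀, rfl⟩ := Finset.mem_image.mp hmP
  refine ⟨m₀, hm₀, fun hc => hmP' ((mem_image_phiP hn).mpr hc), ?_⟩
  intro t ht
  have := hpre (phiP n t) (phiP_lt hn ht)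
  rw [mem_image_phiP hn, mem_image_phiP hn] at this
  exact this

lemma cond_image (hn : 2 ≤ n) {P : Finset ℕ} (hP : ∀ t : ℕ, t + (n - 1) ∈ P → t ∈ P) :
    ∀ t : ℕ, t + n ∈ P.image (phiP n) → t ∈ P.image (phiP n) := by
  intro t ht
  obtain ⟨s, hs, hfs⟩ := Finset.mem_image.mp ht
  have hsge : n - 1 ≤ s := by
    by_contra hc
    push_neg at hc
    rw [phiP_small hn hc] at hfs
    omega
  obtain ⟨s', rfl⟩ : ∃ s', s = s' + (n - 1) := ⟨s - (n - 1), by omega⟩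
  rw [phiP_shift hn] at hfs
  have heq : phiP n s' = t := by omega
  rw [← heq]
  exact (mem_image_phiP hn).mpr (hP s' hs)

lemma cond_image_rev (hn : 2 ≤ n) {P : Finset ℕ}
    (hP : ∀ t : ℕ, t + n ∈ P.image (phiP n) → t ∈ P.image (phiP n)) :
    ∀ t : ℕ, t + (n - 1) ∈ P → t ∈ P := by
  intro t ht
  have h1 : phiP n t + n ∈ P.image (phiP n) := by
    rw [← phiP_shift hn]
    exact (mem_image_phiP hn).mpr ht
  exact (mem_image_phiP hn).mp (hP _ h1)

lemma sortable_iff (hn : 2 ≤ n) {c : List (ZMod n)} (hlen : c.length = n - 1)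
    {w : ℤ → ℤ} (hbij : Function.Bijective w)
    (hper : ∀ x : ℤ, w (x + n) = w x + n)
    (hfin : ∀ x : ℤ, 1 ≤ x → x ≤ n → 1 ≤ w x ∧ w x ≤ n) :
    IsCSortable n c w ↔ IsCSortable n (0 :: c) w := by
  have hlen1 : (0 :: c).length = n := by simp only [List.length_cons, hlen]; omega
  constructor
  · rintro ⟨P, ⟨hred, hlex⟩, hcond⟩
    refine ⟨P.image (phiP n), ⟨(reduced_image hn hlen).mp hred, ?_⟩, ?_⟩
    · intro Q' hQ'
      have havoid := reduced_avoid_zero hn hlen hbij hper hfin hQ'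
      obtain ⟨P', rfl⟩ := eq_image_of_avoid hn havoid
      have hP'red : IsReducedSet n c P' w := (reduced_image hn hlen).mpr hQ'
      rcases hlex P' hP'red with h | h
      · exact Or.inl (by rw [h])
      · exact Or.inr (lex_image hn h)
    · rw [hlen1]
      rw [hlen] at hcond
      exact cond_image hn hcond
  · rintro ⟨Q, ⟨hred, hlex⟩, hcond⟩
    have havoid := reduced_avoid_zero hn hlen hbij hper hfin hred
    obtain ⟨P, rfl⟩ := eq_image_of_avoid hn havoid
    refine ⟨P, ⟨(reduced_image hn hlen).mpr hred, ?_⟩, ?_⟩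
    · intro P' hP'
      have hP'img : IsReducedSet n (0 :: c) (P'.image (phiP n)) w :=
        (reduced_image hn hlen).mp hP'
      rcases hlex _ hP'img with h | h
      · exact Or.inl (Finset.image_injective (phiP_inj hn) h)
      · exact Or.inr (lex_image_rev hn h)
    · rw [hlen]
      rw [hlen1] at hcond
      exact cond_image_rev hn hcond

end Transfer

/- Statement 9: let `c` be a Coxeter element of `S_n` (a word in the generators
`s_1,…,s_{n-1}`, each once), `ĉ = s₀·c` the corresponding Coxeter element of `Ŝ_n`,
and `σ ∈ S_n` embedded in `Ŝ_n` as the affine permutation `w` with window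
`[σ(1),…,σ(n)]`. Then the bi-infinite one-line notation of `w` has a pattern `kij`
with `j ∈ L̄_ĉ` (resp. `jki` with `j ∈ R̄_ĉ`) iff the one-line notation of `σ` has a
pattern `kij` with `j ∈ L_c` (resp. `jki` with `j ∈ R_c`); consequently `σ` is
`c`-sortable in `S_n` iff `w` is `ĉ`-sortable in `Ŝ_n`. -/
theorem statement9 (n : ℕ) (hn : 2 ≤ n) (c : List (ZMod n))
    (hnd : c.Nodup) (hlen : c.length = n - 1) (h0 : (0 : ZMod n) ∉ c)
    (w : ℤ → ℤ) (hw : IsAffinePerm n w)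
    (hfin : ∀ x : ℤ, 1 ≤ x → x ≤ n → 1 ≤ w x ∧ w x ≤ n) :
    (HasKIJ n (0 :: c) w ↔ HasKIJfin n c w) ∧
    (HasJKI n (0 :: c) w ↔ HasJKIfin n c w) ∧
    (IsCSortable n c w ↔ IsCSortable n (0 :: c) w) := by
  obtain ⟨hbij, hper, _⟩ := hw
  exact ⟨kij_iff hn h0 hper hfin, jki_iff hn h0 hper hfin,
    sortable_iff hn hlen hbij hper hfin⟩

end
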